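/- Let f₁, …, f_m : ℝⁿ → (-∞, ∞] be proper convex functions with ⋂_{i=1}^m ri(dom(f_i)) ≠ ∅, let F(x) = [f₁(x), ∞) × ⋯ × [f_m(x), ∞), and fix x̄ ∈ dom(F) with ȳ = (f₁(x̄), …, f_m(x̄)). Then for α = (α₁, …, α_m) ∈ ℝᵐ: D*F(x̄, ȳ)(α) = Σ_{i=1}^m α_i ⊙ ∂f_i(x̄) if α_i ≥ 0 for all i, and D*F(x̄, ȳ)(α) = ∅ if α_i < 0 for some i, where α_i ⊙ ∂f_i(x̄) := α_i ∂f_i(x̄) when α_i > 0 and := ∂^∞ f_i(x̄) when α_i = 0. -/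

import Mathlib

set_option maxHeartbeats 1000000

open Set Pointwise

noncomputable section

/-- Convex subdifferential of `f` at `x̄`. -/
def subdiff {n : ℕ} (f : EuclideanSpace ℝ (Fin n) → EReal)
    (xbar : EuclideanSpace ℝ (Fin n)) : Set (EuclideanSpace ℝ (Fin n)) :=
  {v | ∀ x, ((inner ℝ v (x - xbar) : ℝ) : EReal) ≤ f x - f xbar}

/-- Singular subdifferential of `f` at `x̄`. -/
def singSubdiff {n : ℕ} (f : EuclideanSpace ℝ (Fin n) → EReal)
    (xbar : EuclideanSpace ℝ (Fin n)) : Set (EuclideanSpace ℝ (Fin n)) :=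
  {v | ∀ q : EuclideanSpace ℝ (Fin n) × ℝ, f q.1 ≤ (q.2 : EReal) →
    (inner ℝ v (q.1 - xbar) : ℝ) + 0 * (q.2 - (f xbar).toReal) ≤ 0}

section Lemmas
variable {E : Type*} [NormedAddCommGroup E] [NormedSpace ℝ E]

variable {E : Type*} [NormedAddCommGroup E] [NormedSpace ℝ E]

lemma mem_ri_iff {C : Set E} {z : E} :
    z ∈ intrinsicInterior ℝ C ↔
      z ∈ C ∧ ∃ ε > 0, ∀ x ∈ affineSpan ℝ C, dist x z < ε → x ∈ C := by
  constructor
  · rintro ⟨y, hy, rfl⟩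
    have hyC : (y:E) ∈ C := (interior_subset hy : y ∈ Subtype.val ⁻¹' C)
    refine ⟨hyC, ?_⟩
    rw [mem_interior_iff_mem_nhds, Metric.mem_nhds_iff] at hy
    obtain ⟨ε, hε, hball⟩ := hy
    refine ⟨ε, hε, fun x hx hdx => ?_⟩
    have : (⟨x, hx⟩ : affineSpan ℝ C) ∈ Metric.ball y ε := by
      simpa [Metric.mem_ball, Subtype.dist_eq] using hdx
    exact hball this
  · rintro ⟨hzC, ε, hε, h⟩
    refine ⟨⟨z, subset_affineSpan ℝ C hzC⟩, ?_, rfl⟩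
    rw [mem_interior_iff_mem_nhds, Metric.mem_nhds_iff]
    refine ⟨ε, hε, fun w hw => ?_⟩
    exact h w w.2 (by simpa [Metric.mem_ball, Subtype.dist_eq] using hw)

lemma ri_iInter {ι : Type*} (s : Finset ι) {D : ι → Set E} {z : E}
    (hz : ∀ i ∈ s, z ∈ intrinsicInterior ℝ (D i)) :
    z ∈ intrinsicInterior ℝ (⋂ i ∈ s, D i) := by
  classical
  have hmem : z ∈ ⋂ i ∈ s, D i := by
    simp only [Set.mem_iInter]
    exact fun i hi => (mem_ri_iff.mp (hz i hi)).1
  rcases s.eq_empty_or_nonempty with rfl | hs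
  · refine mem_ri_iff.mpr ⟨hmem, 1, one_pos, fun x _ _ => by simp⟩
  · choose ε hε hball using fun i (hi : i ∈ s) => (mem_ri_iff.mp (hz i hi)).2
    obtain ⟨j, hj, hjmin⟩ := s.exists_min_image (fun i => if h : i ∈ s then ε i h else 1) hs
    refine mem_ri_iff.mpr ⟨hmem, ε j hj, hε j hj, fun x hx hdx => ?_⟩
    simp only [Set.mem_iInter]
    intro i hi
    refine hball i hi x ?_ ?_
    · exact affineSpan_mono ℝ (Set.iInter_subset_of_subset i
        (Set.iInter_subset_of_subset hi le_rfl)) hx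
    · refine lt_of_lt_of_le hdx ?_
      have := hjmin i hi
      simpa [dif_pos hj, dif_pos hi] using this

lemma const_of_min_ri {C : Set E} {z : E} (f : E →L[ℝ] ℝ)
    (hz : z ∈ intrinsicInterior ℝ C) (hmin : ∀ x ∈ C, f z ≤ f x) :
    ∀ x ∈ C, f x = f z := by
  obtain ⟨hzC, ε, hε, hball⟩ := mem_ri_iff.mp hz
  intro x hx
  rcases eq_or_ne x z with rfl | hxz
  · rfl
  have hnorm : (0:ℝ) < ‖z - x‖ := by
    rw [norm_pos_iff, sub_ne_zero]; exact fun h => hxz h.symm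
  set t : ℝ := ε / (2 * ‖z - x‖) with ht
  have htpos : 0 < t := by positivity
  set y : E := t • (z - x) + z with hy
  have hyspan : y ∈ affineSpan ℝ C := by
    have := AffineSubspace.smul_vsub_vadd_mem (affineSpan ℝ C) t
      (subset_affineSpan ℝ C hzC) (subset_affineSpan ℝ C hx) (subset_affineSpan ℝ C hzC)
    simpa [vsub_eq_sub, vadd_eq_add] using this
  have hdist : dist y z < ε := by
    rw [dist_eq_norm]
    have : y - z = t • (z - x) := by simp [hy]
    rw [this, norm_smul, Real.norm_eq_abs, abs_of_pos htpos]
    rw [ht, div_mul_eq_mul_div, mul_comm]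
    rw [div_lt_iff₀ (by positivity)]
    nlinarith
  have hyC : y ∈ C := hball y hyspan hdist
  have := hmin y hyC
  have hfy : f y = t * (f z - f x) + f z := by
    simp [hy, map_add, map_smul, smul_eq_mul, map_sub]
  have hle : f x ≤ f z := by nlinarith [hmin y hyC]
  exact le_antisymm hle (hmin x hx)


lemma exists_support_functional [FiniteDimensional ℝ E] {C : Set E} (hC : Convex ℝ C)
    (hne : C.Nonempty) {b : E} (hb : b ∉ C) :
    ∃ f : E →L[ℝ] ℝ, (∀ x ∈ C, f x ≤ f b) ∧ (∃ x ∈ C, f x < f b) := by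
  by_cases hbs : b ∈ affineSpan ℝ C
  · -- b in the affine span
    obtain ⟨K, hK⟩ := Submodule.exists_isCompl (affineSpan ℝ C).direction
    have π : E →ₗ[ℝ] (affineSpan ℝ C).direction :=
      ((affineSpan ℝ C).direction).projectionOnto K hK
    set πc : E →L[ℝ] (affineSpan ℝ C).direction := LinearMap.toContinuousLinearMap
      (((affineSpan ℝ C).direction).projectionOnto K hK) with hπc
    obtain ⟨z, hz⟩ := hne.intrinsicInterior hC
    obtain ⟨hzC, ε, hε, hball⟩ := mem_ri_iff.mp hz
    set C' : Set E := C + (K : Set E) with hC'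
    have hconvC' : Convex ℝ C' := hC.add K.convex
    have hzint : z ∈ interior C' := by
      rw [mem_interior_iff_mem_nhds, Metric.mem_nhds_iff]
      refine ⟨ε / (‖πc‖ + 1), by positivity, fun y hy => ?_⟩
      have hdy : ‖y - z‖ < ε / (‖πc‖ + 1) := by
        simpa [dist_eq_norm] using hy
      have hpker : (y - z) - (πc (y - z) : E) ∈ K := by
        have happ : ((affineSpan ℝ C).direction).projectionOnto K hK
            ((πc (y - z) : E)) = πc (y - z) :=
          Submodule.projectionOnto_apply_left hK _
        have h1 : ((affineSpan ℝ C).direction).projectionOnto K hK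
            ((y - z) - (πc (y - z) : E)) = 0 := by
          rw [map_sub, happ]
          simp [hπc]
        have h2 := LinearMap.mem_ker.mpr h1
        rwa [Submodule.ker_projectionOnto hK] at h2
      have hpnorm : ‖(πc (y - z) : E)‖ < ε := by
        have h1 := πc.le_opNorm (y - z)
        have h2 : (‖πc‖ + 1) * ‖y - z‖ < (‖πc‖ + 1) * (ε / (‖πc‖ + 1)) :=
          mul_lt_mul_of_pos_left hdy (by positivity)
        have h3 : (‖πc‖ + 1) * (ε / (‖πc‖ + 1)) = ε := mul_div_cancel₀ _ (by positivity)
        have hcoe : ‖(↑(πc (y - z)) : E)‖ = ‖πc (y - z)‖ := rfl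
        rw [hcoe]
        nlinarith [norm_nonneg (y - z), norm_nonneg πc]
      have hx1C : z + (πc (y - z) : E) ∈ C := by
        refine hball _ ?_ ?_
        · have := AffineSubspace.vadd_mem_of_mem_direction (πc (y - z)).2
            (subset_affineSpan ℝ C hzC)
          simpa [vadd_eq_add, add_comm] using this
        · rw [dist_eq_norm]
          simpa using hpnorm
      have hmem : (z + (πc (y - z) : E)) + ((y - z) - (πc (y - z) : E)) ∈ C' :=
        Set.add_mem_add hx1C hpker
      have heq : (z + (πc (y - z) : E)) + ((y - z) - (πc (y - z) : E)) = y := by abel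
      rwa [heq] at hmem
    have hbC' : b ∉ C' := by
      rintro ⟨x, hx, w, hw, rfl⟩
      have h1 : (x + w) - x ∈ (affineSpan ℝ C).direction :=
        AffineSubspace.vsub_mem_direction hbs (subset_affineSpan ℝ C hx)
      have h2 : (x + w) - x ∈ K := by simpa using hw
      have hw0 : w = 0 := by
        have h3 : (x + w) - x ∈ (affineSpan ℝ C).direction ⊓ K := ⟨h1, h2⟩
        rw [hK.inf_eq_bot] at h3
        simpa using h3
      subst hw0
      exact hb (by simpa using hx)
    obtain ⟨f, hf⟩ := geometric_hahn_banach_open_point (hconvC'.interior) isOpen_interior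
      (fun h => hbC' (interior_subset h))
    refine ⟨f, ?_, ⟨z, hzC, hf z hzint⟩⟩
    intro x hx
    clear hπc πc π hz hball hbC' hb hbs
    by_contra hlt
    push_neg at hlt
    set M : ℝ := |f z - f x| + 1 with hM
    have hMpos : (0:ℝ) < M := by positivity
    set a : ℝ := min 1 ((f x - f b) / (2 * M)) with ha
    have hapos : 0 < a := lt_min one_pos (div_pos (by linarith) (by linarith))
    have hale : a ≤ 1 := min_le_left _ _
    have hxC' : x ∈ C' := by
      have h0 : x + (0:E) ∈ C' := Set.add_mem_add hx (Submodule.zero_mem K)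
      simpa using h0
    have hcombo : a • z + (1 - a) • x ∈ interior C' :=
      hconvC'.combo_interior_closure_mem_interior hzint (subset_closure hxC')
        hapos (by linarith) (by ring)
    have T : a * f z + (1 - a) * f x < f b := by
      simpa [map_add, map_smul, smul_eq_mul] using hf _ hcombo
    have h5 : a * (2 * M) ≤ f x - f b := by
      have h3 : a ≤ (f x - f b) / (2 * M) := min_le_right _ _
      calc a * (2 * M) ≤ ((f x - f b) / (2 * M)) * (2 * M) :=
            mul_le_mul_of_nonneg_right h3 (by positivity)
        _ = f x - f b := div_mul_cancel₀ _ (by positivity)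
    have h7 : -(a * M) ≤ a * (f z - f x) := by
      have h6 : a * (-|f z - f x|) ≤ a * (f z - f x) :=
        mul_le_mul_of_nonneg_left (neg_abs_le _) hapos.le
      have h8 : |f z - f x| ≤ M := by rw [hM]; linarith
      nlinarith
    nlinarith [mul_pos hapos hMpos]
  · -- b outside the affine span
    have hclosed : IsClosed ((affineSpan ℝ C : Set E)) :=
      (affineSpan ℝ C).closed_of_finiteDimensional
    obtain ⟨f, u, hfb, hfs⟩ := geometric_hahn_banach_point_closed
      (affineSpan ℝ C).convex hclosed hbs
    obtain ⟨x0, hx0⟩ := hne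
    refine ⟨-f, fun x hx => ?_, ⟨x0, hx0, ?_⟩⟩
    · have := hfs x (subset_affineSpan ℝ C hx)
      simp only [ContinuousLinearMap.neg_apply]
      linarith
    · have := hfs x0 (subset_affineSpan ℝ C hx0)
      simp only [ContinuousLinearMap.neg_apply]
      linarith

lemma proper_separation [FiniteDimensional ℝ E] {A B : Set E} (hA : Convex ℝ A)
    (hB : Convex ℝ B) (hAne : A.Nonempty) (hBne : B.Nonempty) (hd : Disjoint A B) :
    ∃ f : E →L[ℝ] ℝ, (∀ a ∈ A, ∀ b ∈ B, f b ≤ f a) ∧ ∃ a ∈ A, ∃ b ∈ B, f b < f a := by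
  have hCconv : Convex ℝ (B - A) := hB.sub hA
  have hCne : (B - A).Nonempty := hBne.sub hAne
  have h0 : (0:E) ∉ B - A := by
    intro hmem
    rw [Set.mem_sub] at hmem
    obtain ⟨x, hx, y, hy, hxy⟩ := hmem
    have hxy' : x = y := sub_eq_zero.mp hxy
    exact Set.disjoint_left.mp hd (hxy' ▸ hy) hx
  obtain ⟨f, hle, x1, hx1, hlt⟩ := exists_support_functional hCconv hCne h0
  refine ⟨f, fun a ha b hb => ?_, ?_⟩
  · have := hle (b - a) (Set.sub_mem_sub hb ha)
    simp only [map_sub, map_zero] at this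
    linarith
  · obtain ⟨b1, hb1, a1, ha1, heq⟩ := hx1
    refine ⟨a1, ha1, b1, hb1, ?_⟩
    rw [← heq] at hlt
    simp only [map_sub, map_zero] at hlt
    linarith

lemma ri_subset {C : Set E} : intrinsicInterior ℝ C ⊆ C := intrinsicInterior_subset

lemma combo_lt {s s' P Q a b : ℝ} (h1 : P < s) (h2 : Q < s') (ha : 0 ≤ a) (hb : 0 ≤ b)
    (hab : a + b = 1) : a * P + b * Q < a * s + b * s' := by
  rcases ha.lt_or_eq with ha' | ha'
  · nlinarith [mul_lt_mul_of_pos_left h1 ha', mul_le_mul_of_nonneg_left h2.le hb]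
  · have hb1 : b = 1 := by linarith
    rw [← ha', hb1]; simpa using h2

lemma decoupling {X : Type*} [NormedAddCommGroup X] [InnerProductSpace ℝ X]
    [FiniteDimensional ℝ X] {D₁ D₂ : Set X} {φ₁ φ₂ : X → ℝ}
    (h₁ : Convex ℝ {p : X × ℝ | p.1 ∈ D₁ ∧ φ₁ p.1 ≤ p.2})
    (h₂ : Convex ℝ {p : X × ℝ | p.1 ∈ D₂ ∧ φ₂ p.1 ≤ p.2})
    {zb : X} (hz₁ : zb ∈ intrinsicInterior ℝ D₁) (hz₂ : zb ∈ intrinsicInterior ℝ D₂)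
    {xb : X} (hx₁ : xb ∈ D₁) (hx₂ : xb ∈ D₂)
    (hsum : ∀ x, x ∈ D₁ → x ∈ D₂ → 0 ≤ (φ₁ x - φ₁ xb) + (φ₂ x - φ₂ xb)) :
    ∃ v : X, (∀ x ∈ D₁, (inner ℝ v (x - xb) : ℝ) ≤ φ₁ x - φ₁ xb) ∧
      (∀ x ∈ D₂, (inner ℝ (-v) (x - xb) : ℝ) ≤ φ₂ x - φ₂ xb) := by
  set A : Set (X × ℝ) := {p | p.1 ∈ D₁ ∧ φ₁ p.1 - φ₁ xb < p.2} with hA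
  set B : Set (X × ℝ) := {p | p.1 ∈ D₂ ∧ p.2 < -(φ₂ p.1 - φ₂ xb)} with hB
  have hAconv : Convex ℝ A := by
    rintro p hp q hq a b ha hb hab
    have h1 := h₁ (Set.mem_setOf.mpr ⟨hp.1, le_refl (φ₁ p.1)⟩ :
        ((p.1, φ₁ p.1) : X × ℝ) ∈ _) (Set.mem_setOf.mpr ⟨hq.1, le_refl (φ₁ q.1)⟩ :
        ((q.1, φ₁ q.1) : X × ℝ) ∈ _) ha hb hab
    simp only [Prod.smul_mk, Prod.mk_add_mk, Set.mem_setOf_eq, smul_eq_mul] at h1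
    refine ⟨h1.1, ?_⟩
    have h2 : a * (φ₁ p.1 - φ₁ xb) + b * (φ₁ q.1 - φ₁ xb) < a * p.2 + b * q.2 :=
      combo_lt hp.2 hq.2 ha hb hab
    have h3 : φ₁ (a • p.1 + b • q.1) ≤ a * φ₁ p.1 + b * φ₁ q.1 := h1.2
    show φ₁ (a • p.1 + b • q.1) - φ₁ xb < a • p.2 + b • q.2
    simp only [smul_eq_mul]
    have h5 : a * φ₁ xb + b * φ₁ xb = φ₁ xb := by rw [← add_mul, hab, one_mul]
    nlinarith
  have hBconv : Convex ℝ B := by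
    rintro p hp q hq a b ha hb hab
    have h1 := h₂ (Set.mem_setOf.mpr ⟨hp.1, le_refl (φ₂ p.1)⟩ :
        ((p.1, φ₂ p.1) : X × ℝ) ∈ _) (Set.mem_setOf.mpr ⟨hq.1, le_refl (φ₂ q.1)⟩ :
        ((q.1, φ₂ q.1) : X × ℝ) ∈ _) ha hb hab
    simp only [Prod.smul_mk, Prod.mk_add_mk, Set.mem_setOf_eq, smul_eq_mul] at h1
    refine ⟨h1.1, ?_⟩
    have h2 : a * p.2 + b * q.2 < a * (-(φ₂ p.1 - φ₂ xb)) + b * (-(φ₂ q.1 - φ₂ xb)) :=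
      combo_lt hp.2 hq.2 ha hb hab
    have h3 : φ₂ (a • p.1 + b • q.1) ≤ a * φ₂ p.1 + b * φ₂ q.1 := h1.2
    show a • p.2 + b • q.2 < -(φ₂ (a • p.1 + b • q.1) - φ₂ xb)
    simp only [smul_eq_mul]
    have h5 : a * φ₂ xb + b * φ₂ xb = φ₂ xb := by rw [← add_mul, hab, one_mul]
    nlinarith
  have hdisj : Disjoint A B := by
    rw [Set.disjoint_left]
    rintro p ⟨hp1, hp2⟩ ⟨hq1, hq2⟩
    have := hsum p.1 hp1 hq1
    linarith
  have hAne : ((xb, (1:ℝ)) : X × ℝ) ∈ A := ⟨hx₁, by norm_num⟩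
  have hBne : ((xb, (-1:ℝ)) : X × ℝ) ∈ B := ⟨hx₂, by norm_num⟩
  obtain ⟨f, hle, a0, ha0, b0, hb0, hstrict⟩ :=
    proper_separation hAconv hBconv ⟨_, hAne⟩ ⟨_, hBne⟩ hdisj
  set g : X →L[ℝ] ℝ := f.comp (ContinuousLinearMap.inl ℝ X ℝ) with hg
  set β : ℝ := f ((0:X), (1:ℝ)) with hβdef
  have hsplit : ∀ (x : X) (t : ℝ), f (x, t) = g x + t * β := by
    intro x t
    have hdecomp : ((x, t) : X × ℝ) = (x, (0:ℝ)) + t • ((0:X), (1:ℝ)) := by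
      simp [Prod.smul_mk]
    rw [hdecomp, map_add, map_smul, smul_eq_mul]
    simp [hg, hβdef]
  have key : ∀ x' ∈ D₁, ∀ l : ℝ, φ₁ x' - φ₁ xb < l → ∀ x ∈ D₂, ∀ mu : ℝ,
      mu < -(φ₂ x - φ₂ xb) → g x + mu * β ≤ g x' + l * β := by
    intro x' hx' l hl x hx mu hmu
    have := hle (x', l) ⟨hx', hl⟩ (x, mu) ⟨hx, hmu⟩
    rwa [hsplit, hsplit] at this
  have hβ : 0 ≤ β := by
    have := hle _ hAne _ hBne
    rw [hsplit, hsplit] at this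
    linarith
  rcases hβ.lt_or_eq with hβpos | hβ0
  · -- β > 0 : extract v
    set v : X := (-β⁻¹) • ((InnerProductSpace.toDual ℝ X).symm g) with hv
    have hvinner : ∀ y : X, (inner ℝ v y : ℝ) = -β⁻¹ * g y := by
      intro y
      rw [hv, real_inner_smul_left]
      congr 1
      exact InnerProductSpace.toDual_symm_apply
    refine ⟨v, ?_, ?_⟩
    · intro x hx
      refine le_of_forall_pos_le_add ?_
      intro ε hε
      have hk := key x hx (φ₁ x - φ₁ xb + ε/2) (by linarith) xb hx₂ (-(ε/2)) (by simp; positivity)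
      have hinner : (inner ℝ v (x - xb) : ℝ) = -β⁻¹ * (g x - g xb) := by
        rw [hvinner, map_sub]
      have h2 : g xb - g x ≤ (φ₁ x - φ₁ xb + ε) * β := by nlinarith
      have h3 : β⁻¹ * (g xb - g x) ≤ φ₁ x - φ₁ xb + ε := by
        rw [inv_mul_eq_div]
        exact (div_le_iff₀ hβpos).mpr h2
      rw [hinner]
      linarith
    · intro x hx
      refine le_of_forall_pos_le_add ?_
      intro ε hε
      have hk := key xb hx₁ (ε/2) (by simp; positivity) x hx (-(φ₂ x - φ₂ xb) - ε/2)
        (by linarith)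
      have hinner : (inner ℝ (-v) (x - xb) : ℝ) = β⁻¹ * (g x - g xb) := by
        rw [inner_neg_left, hvinner, map_sub]; ring
      rw [hinner]
      have h2 : g x - g xb ≤ (φ₂ x - φ₂ xb + ε) * β := by nlinarith
      have h3 : β⁻¹ * (g x - g xb) ≤ φ₂ x - φ₂ xb + ε := by
        rw [inv_mul_eq_div]
        exact (div_le_iff₀ hβpos).mpr h2
      linarith
  · -- β = 0 : contradiction with properness
    exfalso
    have hgle : ∀ x' ∈ D₁, ∀ x ∈ D₂, g x ≤ g x' := by
      intro x' hx' x hx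
      have := key x' hx' (φ₁ x' - φ₁ xb + 1) (by linarith) x hx (-(φ₂ x - φ₂ xb) - 1)
        (by linarith)
      rw [← hβ0] at this
      simpa using this
    have hc₁ : ∀ x ∈ D₁, g x = g zb :=
      const_of_min_ri g hz₁ (fun x hx => hgle x hx zb (ri_subset hz₂))
    have hc₂ : ∀ x ∈ D₂, g x = g zb := by
      intro x hx
      have h4 := const_of_min_ri (-g) hz₂ (fun y hy => by
        simp only [ContinuousLinearMap.neg_apply, neg_le_neg_iff]
        exact hgle zb (ri_subset hz₁) y hy) x hx
      simpa using h4
    have he1 : f a0 = g a0.1 := by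
      rw [show a0 = (a0.1, a0.2) from rfl, hsplit, ← hβ0]; ring
    have he2 : f b0 = g b0.1 := by
      rw [show b0 = (b0.1, b0.2) from rfl, hsplit, ← hβ0]; ring
    rw [he1, he2, hc₁ a0.1 ha0.1, hc₂ b0.1 hb0.1] at hstrict
    exact lt_irrefl _ hstrict

lemma sum_rule {X : Type*} [NormedAddCommGroup X] [InnerProductSpace ℝ X]
    [FiniteDimensional ℝ X] {ι : Type*} [DecidableEq ι] {D : ι → Set X} {ψ : ι → X → ℝ}
    (hE : ∀ i, Convex ℝ {p : X × ℝ | p.1 ∈ D i ∧ ψ i p.1 ≤ p.2})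
    {zb : X} (hz : ∀ i, zb ∈ intrinsicInterior ℝ (D i))
    {xb : X} (hxb : ∀ i, xb ∈ D i) :
    ∀ (s : Finset ι) (u : X),
      (∀ x, (∀ i ∈ s, x ∈ D i) → (inner ℝ u (x - xb) : ℝ) ≤ ∑ i ∈ s, (ψ i x - ψ i xb)) →
      u ∈ ∑ i ∈ s, {v : X | ∀ x ∈ D i, (inner ℝ v (x - xb) : ℝ) ≤ ψ i x - ψ i xb} := by
  classical
  have hD : ∀ i, Convex ℝ (D i) := by
    intro i x hx y hy a b ha hb hab
    have h1 := hE i (Set.mem_setOf.mpr ⟨hx, le_refl (ψ i x)⟩ :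
        ((x, ψ i x) : X × ℝ) ∈ _) (Set.mem_setOf.mpr ⟨hy, le_refl (ψ i y)⟩ :
        ((y, ψ i y) : X × ℝ) ∈ _) ha hb hab
    exact h1.1
  have hψ : ∀ i, ∀ x ∈ D i, ∀ y ∈ D i, ∀ a b : ℝ, 0 ≤ a → 0 ≤ b → a + b = 1 →
      ψ i (a • x + b • y) ≤ a * ψ i x + b * ψ i y := by
    intro i x hx y hy a b ha hb hab
    have h1 := hE i (Set.mem_setOf.mpr ⟨hx, le_refl (ψ i x)⟩ :
        ((x, ψ i x) : X × ℝ) ∈ _) (Set.mem_setOf.mpr ⟨hy, le_refl (ψ i y)⟩ :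
        ((y, ψ i y) : X × ℝ) ∈ _) ha hb hab
    simpa only [Prod.smul_mk, Prod.mk_add_mk, Set.mem_setOf_eq, smul_eq_mul] using h1.2
  intro s
  induction s using Finset.induction_on with
  | empty =>
    intro u hu
    have h0 : (inner ℝ u u : ℝ) ≤ 0 := by
      have := hu (xb + u) (fun i hi => absurd hi (Finset.notMem_empty i))
      simpa using this
    have hu0 : u = 0 := real_inner_self_nonpos.mp h0
    rw [Finset.sum_empty]
    simp [hu0]
  | @insert j s hj ih =>
    intro u hu
    have h₁ : Convex ℝ {p : X × ℝ | p.1 ∈ D j ∧ (fun x => ψ j x - (inner ℝ u x : ℝ)) p.1 ≤ p.2} := by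
      rintro p hp q hq a b ha hb hab
      have hpD : p.1 ∈ D j := hp.1
      have hpI : ψ j p.1 - (inner ℝ u p.1 : ℝ) ≤ p.2 := hp.2
      have hqD : q.1 ∈ D j := hq.1
      have hqI : ψ j q.1 - (inner ℝ u q.1 : ℝ) ≤ q.2 := hq.2
      have h1 := hE j (show ((p.1, p.2 + (inner ℝ u p.1 : ℝ)) : X × ℝ) ∈
          {p : X × ℝ | p.1 ∈ D j ∧ ψ j p.1 ≤ p.2} from ⟨hpD, by
            show ψ j p.1 ≤ p.2 + (inner ℝ u p.1 : ℝ); linarith⟩)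
        (show ((q.1, q.2 + (inner ℝ u q.1 : ℝ)) : X × ℝ) ∈
          {p : X × ℝ | p.1 ∈ D j ∧ ψ j p.1 ≤ p.2} from ⟨hqD, by
            show ψ j q.1 ≤ q.2 + (inner ℝ u q.1 : ℝ); linarith⟩) ha hb hab
      simp only [Prod.smul_mk, Prod.mk_add_mk, Set.mem_setOf_eq, smul_eq_mul] at h1
      refine ⟨h1.1, ?_⟩
      have hlin : (inner ℝ u (a • p.1 + b • q.1) : ℝ) =
          a * (inner ℝ u p.1 : ℝ) + b * (inner ℝ u q.1 : ℝ) := by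
        rw [inner_add_right, real_inner_smul_right, real_inner_smul_right]
      show ψ j (a • p.1 + b • q.1) - (inner ℝ u (a • p.1 + b • q.1) : ℝ) ≤ a • p.2 + b • q.2
      simp only [smul_eq_mul]
      linarith [h1.2, hlin.le, hlin.ge]
    have h₂ : Convex ℝ {p : X × ℝ | p.1 ∈ ⋂ i ∈ s, D i ∧
        (fun x => ∑ i ∈ s, ψ i x) p.1 ≤ p.2} := by
      rintro p hp q hq a b ha hb hab
      have hp1 : ∀ i ∈ s, p.1 ∈ D i := by
        have := hp.1; rw [Set.mem_iInter₂] at this; exact this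
      have hq1 : ∀ i ∈ s, q.1 ∈ D i := by
        have := hq.1; rw [Set.mem_iInter₂] at this; exact this
      refine ⟨?_, ?_⟩
      · rw [Set.mem_iInter₂]
        intro i hi
        exact hD i (hp1 i hi) (hq1 i hi) ha hb hab
      · show (∑ i ∈ s, ψ i ((a • p + b • q).1)) ≤ (a • p + b • q).2
        have hc1 : (a • p + b • q).1 = a • p.1 + b • q.1 := rfl
        have hc2 : (a • p + b • q).2 = a * p.2 + b * q.2 := rfl
        rw [hc1, hc2]
        calc ∑ i ∈ s, ψ i (a • p.1 + b • q.1)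
            ≤ ∑ i ∈ s, (a * ψ i p.1 + b * ψ i q.1) :=
              Finset.sum_le_sum (fun i hi => hψ i p.1 (hp1 i hi) q.1 (hq1 i hi) a b ha hb hab)
          _ = a * ∑ i ∈ s, ψ i p.1 + b * ∑ i ∈ s, ψ i q.1 := by
              rw [Finset.sum_add_distrib, Finset.mul_sum, Finset.mul_sum]
          _ ≤ a * p.2 + b * q.2 := by
              have hp2 : (∑ i ∈ s, ψ i p.1) ≤ p.2 := hp.2
              have hq2 : (∑ i ∈ s, ψ i q.1) ≤ q.2 := hq.2
              have := mul_le_mul_of_nonneg_left hp2 ha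
              have := mul_le_mul_of_nonneg_left hq2 hb
              linarith
    have hz₂ : zb ∈ intrinsicInterior ℝ (⋂ i ∈ s, D i) := ri_iInter s (fun i _ => hz i)
    have hxb₂ : xb ∈ ⋂ i ∈ s, D i := Set.mem_iInter₂.mpr (fun i _ => hxb i)
    have hsum : ∀ x, x ∈ D j → x ∈ ⋂ i ∈ s, D i →
        0 ≤ ((ψ j x - (inner ℝ u x : ℝ)) - (ψ j xb - (inner ℝ u xb : ℝ))) +
          ((∑ i ∈ s, ψ i x) - (∑ i ∈ s, ψ i xb)) := by
      intro x hx1 hx2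
      have hmem : ∀ i ∈ insert j s, x ∈ D i := by
        intro i hi
        rcases Finset.mem_insert.mp hi with rfl | hi'
        · exact hx1
        · exact Set.mem_iInter₂.mp hx2 i hi'
      have h4 := hu x hmem
      rw [Finset.sum_insert hj] at h4
      have h5 : (inner ℝ u (x - xb) : ℝ) = (inner ℝ u x : ℝ) - (inner ℝ u xb : ℝ) :=
        inner_sub_right _ _ _
      have h6 : (∑ i ∈ s, (ψ i x - ψ i xb)) = (∑ i ∈ s, ψ i x) - ∑ i ∈ s, ψ i xb :=
        Finset.sum_sub_distrib _ _
      linarith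
    obtain ⟨v, hv1, hv2⟩ := decoupling h₁ h₂ (hz j) hz₂ (hxb j) hxb₂ hsum
    have huv : u + v ∈ {v : X | ∀ x ∈ D j, (inner ℝ v (x - xb) : ℝ) ≤ ψ j x - ψ j xb} := by
      intro x hx
      have h7 := hv1 x hx
      have h8 : (inner ℝ (u + v) (x - xb) : ℝ) =
          (inner ℝ u (x - xb) : ℝ) + (inner ℝ v (x - xb) : ℝ) := inner_add_left _ _ _
      have h5 : (inner ℝ u (x - xb) : ℝ) = (inner ℝ u x : ℝ) - (inner ℝ u xb : ℝ) :=
        inner_sub_right _ _ _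
      rw [h8, h5]
      linarith
    have hnv : -v ∈ ∑ i ∈ s, {v : X | ∀ x ∈ D i, (inner ℝ v (x - xb) : ℝ) ≤ ψ i x - ψ i xb} := by
      apply ih
      intro x hx
      have h9 := hv2 x (Set.mem_iInter₂.mpr hx)
      rw [Finset.sum_sub_distrib]
      exact h9
    rw [Finset.sum_insert hj]
    have := Set.add_mem_add huv hnv
    simpa using this

end Lemmas

open Classical in
/-- Coderivative of the generalized epigraphical mapping
`F(x) = ∏ i, [fᵢ(x), ∞)` under the qualification `⋂ i, ri(dom fᵢ) ≠ ∅`. -/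
theorem stmt_18 (n m : ℕ) (f : Fin m → EuclideanSpace ℝ (Fin n) → EReal)
    (hproper : ∀ i, ∃ x, f i x ≠ ⊤) (hbot : ∀ i x, f i x ≠ ⊥)
    (hconv : ∀ i, Convex ℝ {p : EuclideanSpace ℝ (Fin n) × ℝ | f i p.1 ≤ (p.2 : EReal)})
    (hqc : (⋂ i, intrinsicInterior ℝ {x | f i x < ⊤}).Nonempty)
    (xbar : EuclideanSpace ℝ (Fin n)) (hx : ∀ i, f i xbar < ⊤)
    (ybar : EuclideanSpace ℝ (Fin m)) (hybar : ∀ i, ybar i = (f i xbar).toReal)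
    (α : EuclideanSpace ℝ (Fin m)) :
    ((∀ i, 0 ≤ α i) →
      {u | ∀ p : EuclideanSpace ℝ (Fin n) × EuclideanSpace ℝ (Fin m),
          (∀ i, f i p.1 ≤ (p.2 i : EReal)) →
          (inner ℝ u (p.1 - xbar) : ℝ) - (inner ℝ α (p.2 - ybar) : ℝ) ≤ 0} =
        ∑ i : Fin m,
          (if α i = 0 then singSubdiff (f i) xbar else α i • subdiff (f i) xbar)) ∧
    ((∃ i, α i < 0) →
      {u | ∀ p : EuclideanSpace ℝ (Fin n) × EuclideanSpace ℝ (Fin m),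
          (∀ i, f i p.1 ≤ (p.2 i : EReal)) →
          (inner ℝ u (p.1 - xbar) : ℝ) - (inner ℝ α (p.2 - ybar) : ℝ) ≤ 0} = ∅) := by
  classical
  set D : Fin m → Set (EuclideanSpace ℝ (Fin n)) := fun i => {x | f i x < ⊤} with hDdef
  set φ : Fin m → EuclideanSpace ℝ (Fin n) → ℝ := fun i x => (f i x).toReal with hφdef
  have hxD : ∀ i, xbar ∈ D i := fun i => hx i
  have hfin : ∀ i, ∀ x ∈ D i, f i x = ((φ i x : ℝ) : EReal) := by
    intro i x hxi
    exact (EReal.coe_toReal (ne_of_lt hxi) (hbot i x)).symm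
  have hcon : ∀ i (y : EuclideanSpace ℝ (Fin n)) (c : ℝ),
      f i y ≤ (c : EReal) ↔ (y ∈ D i ∧ φ i y ≤ c) := by
    intro i y c
    constructor
    · intro h
      have hyD : y ∈ D i := lt_of_le_of_lt h (EReal.coe_lt_top c)
      refine ⟨hyD, ?_⟩
      rw [hfin i y hyD] at h
      exact EReal.coe_le_coe_iff.mp h
    · rintro ⟨hyD, h⟩
      rw [hfin i y hyD]
      exact EReal.coe_le_coe_iff.mpr h
  have hybφ : ∀ i, ybar i = φ i xbar := fun i => hybar i
  constructor
  · -- Part 1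
    intro hα
    set ψ : Fin m → EuclideanSpace ℝ (Fin n) → ℝ :=
      fun i => if α i = 0 then (fun _ => 0) else (fun x => α i * φ i x) with hψdef
    have hψ0 : ∀ i, α i = 0 → ∀ x, ψ i x = 0 := by
      intro i h x; simp [hψdef, h]
    have hψ1 : ∀ i, α i ≠ 0 → ∀ x, ψ i x = α i * φ i x := by
      intro i h x; simp [hψdef, h]
    have hE : ∀ i, Convex ℝ {p : EuclideanSpace ℝ (Fin n) × ℝ | p.1 ∈ D i ∧ ψ i p.1 ≤ p.2} := by
      intro i p hp q hq a b ha hb hab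
      have hpD : p.1 ∈ D i := hp.1
      have hqD : q.1 ∈ D i := hq.1
      have h1 := hconv i (show ((p.1, φ i p.1) : _ × ℝ) ∈ _ from by
          rw [Set.mem_setOf_eq, hfin i p.1 hpD])
        (show ((q.1, φ i q.1) : _ × ℝ) ∈ _ from by
          rw [Set.mem_setOf_eq, hfin i q.1 hqD]) ha hb hab
      have h2 : f i (a • p.1 + b • q.1) ≤ ((a * φ i p.1 + b * φ i q.1 : ℝ) : EReal) := by
        simpa [Prod.smul_mk, Prod.mk_add_mk, smul_eq_mul] using h1
      obtain ⟨hcD, hcφ⟩ := (hcon i _ _).mp h2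
      refine ⟨hcD, ?_⟩
      show ψ i (a • p.1 + b • q.1) ≤ a • p.2 + b • q.2
      by_cases h : α i = 0
      · rw [hψ0 i h]
        have hp2 : (0:ℝ) ≤ p.2 := by have := hp.2; rwa [hψ0 i h] at this
        have hq2 : (0:ℝ) ≤ q.2 := by have := hq.2; rwa [hψ0 i h] at this
        simp only [smul_eq_mul]
        nlinarith [mul_le_mul_of_nonneg_left hp2 ha, mul_le_mul_of_nonneg_left hq2 hb]
      · rw [hψ1 i h]
        have hp2 : α i * φ i p.1 ≤ p.2 := by have := hp.2; rwa [hψ1 i h] at this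
        have hq2 : α i * φ i q.1 ≤ q.2 := by have := hq.2; rwa [hψ1 i h] at this
        have h3 := mul_le_mul_of_nonneg_left hcφ (hα i)
        simp only [smul_eq_mul]
        nlinarith [mul_le_mul_of_nonneg_left hp2 ha, mul_le_mul_of_nonneg_left hq2 hb,
          mul_nonneg ha (hα i), mul_nonneg hb (hα i)]
    have hset : ∀ i : Fin m,
        (if α i = 0 then singSubdiff (f i) xbar else α i • subdiff (f i) xbar) =
        {v | ∀ x ∈ D i, (inner ℝ v (x - xbar) : ℝ) ≤ ψ i x - ψ i xbar} := by
      intro i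
      by_cases h : α i = 0
      · rw [if_pos h]
        ext v
        constructor
        · intro hv x hxi
          have h5 := hv (x, φ i x) (by rw [hfin i x hxi])
          rw [hψ0 i h x, hψ0 i h xbar]
          simp only [zero_mul, add_zero] at h5
          linarith
        · intro hv q hq
          have hqD : q.1 ∈ D i := ((hcon i q.1 q.2).mp hq).1
          have h5 := hv q.1 hqD
          rw [hψ0 i h q.1, hψ0 i h xbar] at h5
          simp only [zero_mul, add_zero]
          linarith
      · rw [if_neg h]
        have hαi : 0 < α i := lt_of_le_of_ne (hα i) (Ne.symm h)
        ext v
        constructor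
        · rintro ⟨w, hw, rfl⟩
          intro x hxi
          have h5 := hw x
          rw [hfin i x hxi, hfin i xbar (hxD i), ← EReal.coe_sub] at h5
          have h6 : (inner ℝ w (x - xbar) : ℝ) ≤ φ i x - φ i xbar := EReal.coe_le_coe_iff.mp h5
          have h7 : (inner ℝ (α i • w) (x - xbar) : ℝ) = α i * (inner ℝ w (x - xbar) : ℝ) :=
            real_inner_smul_left _ _ _
          rw [h7, hψ1 i h x, hψ1 i h xbar]
          nlinarith [mul_le_mul_of_nonneg_left h6 (hα i)]
        · intro hv
          refine ⟨(α i)⁻¹ • v, ?_, ?_⟩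
          · intro x
            by_cases hxi : x ∈ D i
            · have h5 := hv x hxi
              rw [hψ1 i h x, hψ1 i h xbar] at h5
              have h6 : (inner ℝ ((α i)⁻¹ • v) (x - xbar) : ℝ) ≤ φ i x - φ i xbar := by
                rw [real_inner_smul_left]
                have h8 := mul_le_mul_of_nonneg_left h5 (inv_nonneg.mpr (hα i))
                calc (α i)⁻¹ * (inner ℝ v (x - xbar) : ℝ)
                    ≤ (α i)⁻¹ * (α i * φ i x - α i * φ i xbar) := h8
                  _ = φ i x - φ i xbar := by
                      rw [mul_sub, inv_mul_cancel_left₀ h, inv_mul_cancel_left₀ h]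
              rw [hfin i x hxi, hfin i xbar (hxD i), ← EReal.coe_sub]
              exact EReal.coe_le_coe_iff.mpr h6
            · have htop : f i x = ⊤ := top_le_iff.mp (not_lt.mp hxi)
              rw [htop, hfin i xbar (hxD i), EReal.top_sub_coe]
              exact le_top
          · show α i • ((α i)⁻¹ • v) = v
            rw [smul_smul, mul_inv_cancel₀ h, one_smul]
    rw [Finset.sum_congr rfl (fun i _ => hset i)]
    ext u
    simp only [Set.mem_setOf_eq]
    constructor
    · intro hu
      obtain ⟨zb, hzb⟩ := hqc
      have hz : ∀ i, zb ∈ intrinsicInterior ℝ (D i) := fun i => Set.mem_iInter.mp hzb i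
      apply sum_rule hE hz hxD Finset.univ u
      intro x hxall
      have hxDall : ∀ i, x ∈ D i := fun i => hxall i (Finset.mem_univ i)
      set yv : EuclideanSpace ℝ (Fin m) := (WithLp.equiv 2 (Fin m → ℝ)).symm
        (fun i => φ i x) with hyvdef
      have hyvi : ∀ i, yv i = φ i x := fun i => rfl
      have hc : ∀ i, f i x ≤ ((yv i : ℝ) : EReal) := by
        intro i; rw [hyvi i, hfin i x (hxDall i)]
      have h5 := hu (x, yv) hc
      have h6 : (inner ℝ α (yv - ybar) : ℝ) = ∑ i, α i * (yv i - ybar i) := by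
        rw [PiLp.inner_apply]
        apply Finset.sum_congr rfl
        intro i _
        rw [PiLp.sub_apply]
        simp [RCLike.inner_apply, mul_comm]
      have h7 : (∑ i, α i * (yv i - ybar i)) = ∑ i : Fin m, (ψ i x - ψ i xbar) := by
        apply Finset.sum_congr rfl
        intro i _
        by_cases hαi : α i = 0
        · rw [hψ0 i hαi x, hψ0 i hαi xbar, hαi]; ring
        · rw [hψ1 i hαi x, hψ1 i hαi xbar, hyvi i, hybφ i]; ring
      rw [← h7, ← h6]
      linarith
    · intro hu p hp
      rw [Set.mem_finset_sum] at hu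
      obtain ⟨g, hg, hgsum⟩ := hu
      have hpD : ∀ i, p.1 ∈ D i := fun i => ((hcon i p.1 (p.2 i)).mp (hp i)).1
      have hpφ : ∀ i, φ i p.1 ≤ p.2 i := fun i => ((hcon i p.1 (p.2 i)).mp (hp i)).2
      have hterm : ∀ i : Fin m, (inner ℝ (g i) (p.1 - xbar) : ℝ) ≤ α i * ((p.2 - ybar) i) := by
        intro i
        have h8 := hg (Finset.mem_univ i) p.1 (hpD i)
        rw [PiLp.sub_apply]
        by_cases hαi : α i = 0
        · rw [hψ0 i hαi p.1, hψ0 i hαi xbar] at h8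
          rw [hαi]
          simp only [zero_mul]
          linarith
        · rw [hψ1 i hαi p.1, hψ1 i hαi xbar] at h8
          have h9 : φ i p.1 - φ i xbar ≤ p.2 i - ybar i := by
            rw [hybφ i]
            linarith [hpφ i]
          calc (inner ℝ (g i) (p.1 - xbar) : ℝ) ≤ α i * φ i p.1 - α i * φ i xbar := h8
            _ = α i * (φ i p.1 - φ i xbar) := by ring
            _ ≤ α i * (p.2 i - ybar i) := mul_le_mul_of_nonneg_left h9 (hα i)
      have h10 : (inner ℝ u (p.1 - xbar) : ℝ) = ∑ i, (inner ℝ (g i) (p.1 - xbar) : ℝ) := by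
        rw [← hgsum, sum_inner]
      have h11 : (inner ℝ α (p.2 - ybar) : ℝ) = ∑ i, α i * ((p.2 - ybar) i) := by
        rw [PiLp.inner_apply]
        apply Finset.sum_congr rfl
        intro i _
        simp [RCLike.inner_apply, mul_comm]
      rw [h10, h11, sub_nonpos]
      exact Finset.sum_le_sum (fun i _ => hterm i)
  · -- Part 2
    rintro ⟨i, hi⟩
    rw [Set.eq_empty_iff_forall_notMem]
    intro u hu
    set y : EuclideanSpace ℝ (Fin m) := ybar + EuclideanSpace.single i 1 with hy
    have hcony : ∀ j, f j xbar ≤ ((y j : ℝ) : EReal) := by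
      intro j
      have h1 : ybar j ≤ y j := by
        rw [hy]
        have h2 : (ybar + EuclideanSpace.single i (1:ℝ)) j
            = ybar j + EuclideanSpace.single i 1 j := rfl
        rw [h2, EuclideanSpace.single_apply]
        split_ifs <;> norm_num
      calc f j xbar = ((φ j xbar : ℝ) : EReal) := hfin j xbar (hxD j)
        _ ≤ ((y j : ℝ) : EReal) := by
            rw [EReal.coe_le_coe_iff, ← hybφ j]
            exact h1
    have h2 := hu (xbar, y) hcony
    simp only [sub_self, inner_zero_right] at h2
    have h3 : y - ybar = EuclideanSpace.single i 1 := by rw [hy]; abel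
    rw [h3] at h2
    have h4 : (inner ℝ α (EuclideanSpace.single i (1:ℝ)) : ℝ) = α i := by
      rw [EuclideanSpace.inner_single_right]
      simp
    rw [h4] at h2
    linarith
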